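/- arXiv:2412.19252 — 2 statements merged into one kernel-verified Lean document; each statement's English description precedes it below -/
import Mathlib

section
/- Let ε = (ε_1,...,ε_d) be a random vector in R^d with independent coordinates satisfying E[ε_i] = E[ε_i^3] = 0 for i ≥ 2, E[ε_i^2] = 1 and E[ε_i^4] ≥ 1 + c for all i, where c > 0. Then for every symmetric matrix A ∈ R^{d×d}, E[(ε^T A ε)^2] ≥ min(2, c) · ‖A‖_F^2. -/
/-!
Expanding the square, `E[(εᵀAε)²] = ∑ A i j * A k l * E[ε i ε j ε k ε l]`. By independence and the
vanishing odd moments, `E[ε i ε j ε k ε l]` is the Gaussian (Isserlis) value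
`δ i j δ k l + δ i k δ j l + δ i l δ j k` corrected by `E[ε i ⁴] - 3` on the diagonal `i = j = k = l`.
For symmetric `A` this gives `(tr A)² + 2 ∑ i ≠ j, A i j ² + ∑ i, (E[ε i ⁴] - 1) A i i ²`, and the
off-diagonal and diagonal parts are bounded below by `2` and `c` times their share of `‖A‖_F²`.
-/

open MeasureTheory ProbabilityTheory BigOperators

theorem Multiset.prod_map_eq_prod_pow_count {ι M : Type*} [Fintype ι] [DecidableEq ι]
    [CommMonoid M] (s : Multiset ι) (f : ι → M) :
    (s.map f).prod = ∏ m, f m ^ s.count m := by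
  rw [Finset.prod_multiset_map_count]
  refine Finset.prod_subset (Finset.subset_univ _) fun m _ hm => ?_
  rw [Multiset.count_eq_zero.mpr (by simpa using hm), pow_zero]

theorem ProbabilityTheory.iIndepFun.integral_multiset_prod {Ω ι 𝕜 : Type*} [MeasurableSpace Ω]
    {μ : Measure Ω} [Fintype ι] [DecidableEq ι] [RCLike 𝕜] {X : ι → Ω → 𝕜}
    (hX : iIndepFun X μ) (mX : ∀ i, AEStronglyMeasurable (X i) μ) (s : Multiset ι) :
    ∫ ω, (s.map (X · ω)).prod ∂μ = ∏ m, ∫ ω, X m ω ^ s.count m ∂μ := by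
  simp_rw [Multiset.prod_map_eq_prod_pow_count]
  exact (hX.comp (fun m x => x ^ s.count m) fun m => by fun_prop).integral_fun_prod_eq_prod_integral
    fun m => (mX m).pow _

section FourthMoments

variable {ι : Type*} [Fintype ι]

/-- `E[ε i * ε j * ε k * ε l]` for independent coordinates with vanishing first and third moments
and unit second moments; `κ i = E[ε i ^ 4] - 3` is the excess kurtosis of `ε i`. -/
def fourthMoment [DecidableEq ι] (κ : ι → ℝ) (i j k l : ι) : ℝ :=
  (if i = j then 1 else 0) * (if k = l then 1 else 0)
    + (if i = k then 1 else 0) * (if j = l then 1 else 0)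
    + (if i = l then 1 else 0) * (if j = k then 1 else 0)
    + if i = j ∧ j = k ∧ k = l then κ i else 0

theorem prod_count_eq_fourthMoment [DecidableEq ι] (M : ℕ → ι → ℝ) (h0 : ∀ m, M 0 m = 1)
    (h1 : ∀ m, M 1 m = 0) (h2 : ∀ m, M 2 m = 1) (h3 : ∀ m, M 3 m = 0) (i j k l : ι) :
    ∏ m, M (({i, j, k, l} : Multiset ι).count m) m = fourthMoment (fun m => M 4 m - 3) i j k l := by
  rw [← Finset.prod_subset (Finset.subset_univ {i, j, k, l}) fun m _ hm => by
    rw [Multiset.count_eq_zero.mpr (by simpa using hm), h0]]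
  unfold fourthMoment
  by_cases hij : i = j <;> by_cases hik : i = k <;> by_cases hil : i = l <;>
    by_cases hjk : j = k <;> by_cases hjl : j = l <;> by_cases hkl : k = l <;>
    subst_vars <;> simp_all [Finset.prod_insert, Multiset.count_cons, Ne.symm]
  ring

theorem sum_mul_mul_fourthMoment [DecidableEq ι] (A : Matrix ι ι ℝ) (κ : ι → ℝ) :
    ∑ i, ∑ j, ∑ k, ∑ l, A i j * A k l * fourthMoment κ i j k l =
      A.trace ^ 2 + ∑ i, ∑ j, A i j ^ 2 + ∑ i, ∑ j, A i j * A j i + ∑ i, A i i ^ 2 * κ i := by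
  simp [fourthMoment, mul_add, Finset.sum_add_distrib, mul_ite, ite_and, Matrix.trace, sq,
    Finset.sum_mul_sum, mul_comm]

theorem min_mul_sum_sq_le_sum_mul_fourthMoment [DecidableEq ι] {A : Matrix ι ι ℝ}
    (hA : A.IsSymm) {c : ℝ} {κ : ι → ℝ} (hκ : ∀ i, c - 2 ≤ κ i) :
    min 2 c * ∑ i, ∑ j, A i j ^ 2 ≤
      ∑ i, ∑ j, ∑ k, ∑ l, A i j * A k l * fourthMoment κ i j k l := by
  set F := ∑ i, ∑ j, A i j ^ 2
  set D := ∑ i, A i i ^ 2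
  have hDF : D ≤ F := Finset.sum_le_sum fun i _ =>
    Finset.single_le_sum (f := fun j => A i j ^ 2) (fun j _ => sq_nonneg _) (Finset.mem_univ i)
  have hD : 0 ≤ D := Finset.sum_nonneg fun i _ => sq_nonneg _
  have hsymm : ∑ i, ∑ j, A i j * A j i = F :=
    Finset.sum_congr rfl fun i _ => Finset.sum_congr rfl fun j _ => by rw [hA.apply i j, sq]
  have hdiag : (c - 2) * D ≤ ∑ i, A i i ^ 2 * κ i := by
    rw [Finset.mul_sum]
    exact Finset.sum_le_sum fun i _ => by nlinarith [hκ i, sq_nonneg (A i i)]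
  rw [sum_mul_mul_fourthMoment, hsymm]
  calc min 2 c * F = min 2 c * (F - D) + min 2 c * D := by ring
    _ ≤ 2 * (F - D) + c * D :=
      add_le_add (mul_le_mul_of_nonneg_right (min_le_left _ _) (sub_nonneg.mpr hDF))
        (mul_le_mul_of_nonneg_right (min_le_right _ _) hD)
    _ = 2 * F + (c - 2) * D := by ring
    _ ≤ A.trace ^ 2 + F + F + ∑ i, A i i ^ 2 * κ i := by nlinarith [sq_nonneg A.trace]

variable {Ω : Type*} [MeasurableSpace Ω] {μ : Measure Ω}

theorem integrable_mul_mul_mul_of_memLp_four {f g h k : Ω → ℝ} (hf : MemLp f 4 μ)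
    (hg : MemLp g 4 μ) (hh : MemLp h 4 μ) (hk : MemLp k 4 μ) :
    Integrable (fun ω => f ω * g ω * h ω * k ω) μ := by
  have : ENNReal.HolderTriple 4 4 2 := ⟨by
    rw [← two_mul, show (4 : ENNReal) = 2 * 2 by norm_num, ENNReal.mul_inv (by simp) (by simp),
      ← mul_assoc, ENNReal.mul_inv_cancel (by simp) (by simp), one_mul]⟩
  have := (hg.mul' hf (r := 2)).integrable_mul (hk.mul' hh (r := 2))
  simpa only [Pi.mul_def, mul_assoc] using this

theorem integral_sq_sum_sum_eq {ε : ι → Ω → ℝ} (A : Matrix ι ι ℝ)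
    (hint : ∀ i j k l, Integrable (fun ω => ε i ω * ε j ω * ε k ω * ε l ω) μ) :
    ∫ ω, (∑ i, ∑ j, ε i ω * A i j * ε j ω) ^ 2 ∂μ =
      ∑ i, ∑ j, ∑ k, ∑ l, A i j * A k l * ∫ ω, ε i ω * ε j ω * ε k ω * ε l ω ∂μ := by
  have hexpand : ∀ ω, (∑ i, ∑ j, ε i ω * A i j * ε j ω) ^ 2 =
      ∑ i, ∑ j, ∑ k, ∑ l, A i j * A k l * (ε i ω * ε j ω * ε k ω * ε l ω) := fun ω => by
    simp only [sq, Finset.sum_mul, Finset.mul_sum]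
    exact Finset.sum_congr rfl fun i _ => Finset.sum_congr rfl fun j _ =>
      Finset.sum_congr rfl fun k _ => Finset.sum_congr rfl fun l _ => by ring
  simp_rw [hexpand]
  simp (disch := intro _ _; fun_prop) only [integral_finsetSum, integral_const_mul]

theorem integral_mul_mul_mul_eq_fourthMoment [DecidableEq ι] [IsProbabilityMeasure μ]
    {ε : ι → Ω → ℝ} (hindep : iIndepFun ε μ) (hmeas : ∀ i, AEStronglyMeasurable (ε i) μ)
    (hmean : ∀ i, ∫ ω, ε i ω ∂μ = 0) (h2 : ∀ i, ∫ ω, ε i ω ^ 2 ∂μ = 1)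
    (h3 : ∀ i, ∫ ω, ε i ω ^ 3 ∂μ = 0) (i j k l : ι) :
    ∫ ω, ε i ω * ε j ω * ε k ω * ε l ω ∂μ =
      fourthMoment (fun m => ∫ ω, ε m ω ^ 4 ∂μ - 3) i j k l := by
  have := hindep.integral_multiset_prod hmeas {i, j, k, l}
  simp only [Multiset.insert_eq_cons, Multiset.map_cons, Multiset.prod_cons,
    Multiset.map_singleton, Multiset.prod_singleton, ← mul_assoc] at this
  rw [this]
  exact prod_count_eq_fourthMoment (fun n m => ∫ ω, ε m ω ^ n ∂μ) (fun m => by simp)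
    (fun m => by simpa using hmean m) h2 h3 i j k l

end FourthMoments

theorem stmt0_general {Ω : Type*} [MeasurableSpace Ω] {μ : Measure Ω} [IsProbabilityMeasure μ]
    {d : ℕ} (ε : Fin d → Ω → ℝ)
    (hindep : iIndepFun ε μ)
    (hL4 : ∀ i, MemLp (ε i) 4 μ)
    (c : ℝ)
    (hmean : ∀ i, ∫ ω, ε i ω ∂μ = 0)
    (h3 : ∀ i, ∫ ω, (ε i ω) ^ 3 ∂μ = 0)
    (h2 : ∀ i, ∫ ω, (ε i ω) ^ 2 ∂μ = 1)
    (h4 : ∀ i, 1 + c ≤ ∫ ω, (ε i ω) ^ 4 ∂μ)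
    (A : Matrix (Fin d) (Fin d) ℝ) (hA : A.IsSymm) :
    min 2 c * ∑ i, ∑ j, (A i j) ^ 2 ≤
      ∫ ω, (∑ i, ∑ j, ε i ω * A i j * ε j ω) ^ 2 ∂μ := by
  rw [integral_sq_sum_sum_eq A fun i j k l =>
    integrable_mul_mul_mul_of_memLp_four (hL4 i) (hL4 j) (hL4 k) (hL4 l)]
  simp_rw [integral_mul_mul_mul_eq_fourthMoment hindep (fun i => (hL4 i).1) hmean h2 h3]
  exact min_mul_sum_sq_le_sum_mul_fourthMoment hA fun i => by linarith [h4 i]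

/-- If `ε : Fin d → Ω → ℝ` has independent coordinates with
`E[ε i] = E[(ε i)^3] = 0`, `E[(ε i)^2] = 1` and `E[(ε i)^4] ≥ 1 + c` for some `c > 0`,
then for every symmetric matrix `A`, `E[(εᵀ A ε)^2] ≥ min 2 c * ‖A‖_F²`. -/
theorem stmt0 {Ω : Type*} [MeasurableSpace Ω] {μ : Measure Ω} [IsProbabilityMeasure μ]
    {d : ℕ} (ε : Fin d → Ω → ℝ)
    (hindep : iIndepFun ε μ)
    (hmeas : ∀ i, Measurable (ε i))
    (hL4 : ∀ i, MemLp (ε i) 4 μ)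
    (c : ℝ) (hc : 0 < c)
    (hmean : ∀ i, ∫ ω, ε i ω ∂μ = 0)
    (h3 : ∀ i, ∫ ω, (ε i ω) ^ 3 ∂μ = 0)
    (h2 : ∀ i, ∫ ω, (ε i ω) ^ 2 ∂μ = 1)
    (h4 : ∀ i, 1 + c ≤ ∫ ω, (ε i ω) ^ 4 ∂μ)
    (A : Matrix (Fin d) (Fin d) ℝ) (hA : A.IsSymm) :
    min 2 c * ∑ i, ∑ j, (A i j) ^ 2 ≤
      ∫ ω, (∑ i, ∑ j, ε i ω * A i j * ε j ω) ^ 2 ∂μ :=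
  stmt0_general ε hindep hL4 c hmean h3 h2 h4 A hA
end

section
/- Let α*, β* ∈ R^d satisfy ‖α*‖_2 ≥ c, ‖β*‖_2 ≥ c for some c > 0 and |(α*)^T β*| ≤ (1 - c')‖α*‖_2 ‖β*‖_2 for some c' ∈ (0,1). Let (u,v) ∈ R^{2d} be a unit vector orthogonal to (α*, 2β*), i.e., u^T α* + 2 v^T β* = 0. Define A = β* u^T + u(β*)^T - (1/2) α* v^T - (1/2) v(α*)^T. Then ‖A‖_F^2 ≥ c' · min(2‖β*‖_2^2, (1/2)‖α*‖_2^2) ≥ c' c^2 / 2. -/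
/-!
Write `A = P - ½ Q` with the symmetrized outer products `P = β uᵀ + u βᵀ` and `Q = α vᵀ + v αᵀ`.
Expanding, `‖A‖_F² = 2‖β‖²‖u‖² + ½‖α‖²‖v‖² + 2(uᵀβ)² + ½(αᵀv)² - 2(αᵀβ)(uᵀv) - 2(uᵀα)(vᵀβ)`.
Orthogonality gives `uᵀα = -2 vᵀβ`, so the last term is `4(vᵀβ)² ≥ 0`; the correlation bound,
Cauchy–Schwarz for `uᵀv` and AM–GM bound `2(αᵀβ)(uᵀv)` by `(1 - c')(2‖β‖²‖u‖² + ½‖α‖²‖v‖²)`.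
Hence `‖A‖_F² ≥ c'(2‖β‖²‖u‖² + ½‖α‖²‖v‖²) ≥ c' min(2‖β‖², ½‖α‖²)` as `‖u‖² + ‖v‖² = 1`.
-/

open Finset

theorem min_mul_add_le {x y U V : ℝ} (hU : 0 ≤ U) (hV : 0 ≤ V) :
    min x y * (U + V) ≤ x * U + y * V := by
  rw [mul_add]
  gcongr
  exacts [min_le_left x y, min_le_right x y]

theorem two_mul_le_of_abs_le_sqrt_mul_sqrt {κ a b U V s m : ℝ} (hκ : 0 ≤ κ) (ha : 0 ≤ a)
    (hb : 0 ≤ b) (hU : 0 ≤ U) (hV : 0 ≤ V) (hs : |s| ≤ κ * √a * √b) (hm : |m| ≤ √U * √V) :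
    2 * s * m ≤ κ * (2 * b * U + 1 / 2 * a * V) := by
  have amgm : 2 * ((√a * √b) * (√U * √V)) ≤ 2 * b * U + 1 / 2 * a * V := by
    nlinarith [sq_nonneg (2 * (√b * √U) - √a * √V), Real.sq_sqrt ha, Real.sq_sqrt hb,
      Real.sq_sqrt hU, Real.sq_sqrt hV]
  calc 2 * s * m ≤ 2 * (|s| * |m|) := by rw [← abs_mul, mul_assoc]; gcongr; exact le_abs_self _
    _ ≤ 2 * ((κ * √a * √b) * (√U * √V)) := by gcongr
    _ = κ * (2 * ((√a * √b) * (√U * √V))) := by ring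
    _ ≤ κ * (2 * b * U + 1 / 2 * a * V) := by gcongr

section
variable {ι : Type*} [Fintype ι]

theorem sum_sum_symm_outer_mul {R : Type*} [CommSemiring R] (x y z w : ι → R) :
    ∑ i, ∑ j, (x i * y j + y i * x j) * (z i * w j + w i * z j) =
      2 * ((∑ i, x i * z i) * (∑ i, y i * w i) + (∑ i, x i * w i) * (∑ i, y i * z i)) := by
  have hexpand :
      2 * ((∑ i, x i * z i) * (∑ i, y i * w i) + (∑ i, x i * w i) * (∑ i, y i * z i)) =
      (∑ i, x i * z i) * (∑ i, y i * w i) + (∑ i, x i * w i) * (∑ i, y i * z i) +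
        (∑ i, y i * z i) * (∑ i, x i * w i) + (∑ i, y i * w i) * (∑ i, x i * z i) := by ring
  rw [hexpand]
  simp only [sum_mul_sum, ← sum_add_distrib]
  exact sum_congr rfl fun i _ => sum_congr rfl fun j _ => by ring

theorem sum_sum_sq_eq (α β u v : ι → ℝ) :
    ∑ i, ∑ j, (β i * u j + u i * β j - 1 / 2 * α i * v j - 1 / 2 * v i * α j) ^ 2 =
      2 * (∑ i, β i ^ 2) * (∑ i, u i ^ 2) + 1 / 2 * (∑ i, α i ^ 2) * (∑ i, v i ^ 2)
        + 2 * (∑ i, u i * β i) ^ 2 + 1 / 2 * (∑ i, α i * v i) ^ 2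
        - 2 * (∑ i, α i * β i) * (∑ i, u i * v i)
        - 2 * (∑ i, u i * α i) * (∑ i, v i * β i) := by
  have hsplit : ∀ i j, (β i * u j + u i * β j - 1 / 2 * α i * v j - 1 / 2 * v i * α j) ^ 2 =
      (β i * u j + u i * β j) * (β i * u j + u i * β j)
        - (β i * u j + u i * β j) * (α i * v j + v i * α j)
        + 1 / 4 * ((α i * v j + v i * α j) * (α i * v j + v i * α j)) := fun i j => by ring
  simp only [hsplit, sum_add_distrib, sum_sub_distrib, ← mul_sum, sum_sum_symm_outer_mul]
  simp only [← sq, mul_comm (β _) (u _), mul_comm (v _) (α _), mul_comm (β _) (α _),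
    mul_comm (β _) (v _)]
  ring

theorem abs_sum_mul_le_sqrt_mul_sqrt (u v : ι → ℝ) :
    |∑ i, u i * v i| ≤ √(∑ i, u i ^ 2) * √(∑ i, v i ^ 2) := by
  rw [← Real.sqrt_mul (by positivity)]
  exact Real.abs_le_sqrt (sum_mul_sq_le_sq_mul_sq _ u v)

theorem mul_add_le_sum_sum_sq {κ : ℝ} (hκ : κ ≤ 1) (α β u v : ι → ℝ)
    (hcol : |∑ i, α i * β i| ≤ (1 - κ) * √(∑ i, α i ^ 2) * √(∑ i, β i ^ 2))
    (horth : (∑ i, u i * α i) + 2 * ∑ i, v i * β i = 0) :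
    κ * (2 * (∑ i, β i ^ 2) * (∑ i, u i ^ 2) + 1 / 2 * (∑ i, α i ^ 2) * (∑ i, v i ^ 2)) ≤
      ∑ i, ∑ j, (β i * u j + u i * β j - 1 / 2 * α i * v j - 1 / 2 * v i * α j) ^ 2 := by
  have cross := two_mul_le_of_abs_le_sqrt_mul_sqrt (sub_nonneg.2 hκ) (by positivity)
    (by positivity) (by positivity) (by positivity) hcol (abs_sum_mul_le_sqrt_mul_sqrt u v)
  have hpq : (∑ i, u i * α i) * (∑ i, v i * β i) = -2 * (∑ i, v i * β i) ^ 2 := by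
    rw [eq_neg_of_add_eq_zero_left horth]; ring
  rw [sum_sum_sq_eq]
  linarith [sq_nonneg (∑ i, u i * β i), sq_nonneg (∑ i, α i * v i), sq_nonneg (∑ i, v i * β i)]

end

/-- If `‖α*‖₂ ≥ c`, `‖β*‖₂ ≥ c`, `|α*ᵀβ*| ≤ (1-c')‖α*‖₂‖β*‖₂` and `(u,v)`
is a unit vector orthogonal to `(α*, 2β*)`, then for
`A = β* uᵀ + u β*ᵀ - (1/2) α* vᵀ - (1/2) v α*ᵀ` one has
`‖A‖_F² ≥ c' · min(2‖β*‖₂², (1/2)‖α*‖₂²) ≥ c' c² / 2`. -/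
theorem stmt5 {d : ℕ} (c c' : ℝ) (hc : 0 < c) (hc'0 : 0 < c') (hc'1 : c' < 1)
    (α β u v : Fin d → ℝ)
    (hα : c ≤ Real.sqrt (∑ i, α i ^ 2))
    (hβ : c ≤ Real.sqrt (∑ i, β i ^ 2))
    (hcol : |∑ i, α i * β i| ≤
      (1 - c') * Real.sqrt (∑ i, α i ^ 2) * Real.sqrt (∑ i, β i ^ 2))
    (hunit : ∑ i, u i ^ 2 + ∑ i, v i ^ 2 = 1)
    (horth : (∑ i, u i * α i) + 2 * ∑ i, v i * β i = 0)
    (A : Matrix (Fin d) (Fin d) ℝ)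
    (hA : ∀ i j, A i j =
      β i * u j + u i * β j - (1/2) * α i * v j - (1/2) * v i * α j) :
    c' * min (2 * ∑ i, β i ^ 2) ((1/2) * ∑ i, α i ^ 2) ≤ ∑ i, ∑ j, (A i j) ^ 2 ∧
      c' * c ^ 2 / 2 ≤ c' * min (2 * ∑ i, β i ^ 2) ((1/2) * ∑ i, α i ^ 2) := by
  constructor
  · calc c' * min (2 * ∑ i, β i ^ 2) ((1/2) * ∑ i, α i ^ 2)
        = c' * (min (2 * ∑ i, β i ^ 2) ((1/2) * ∑ i, α i ^ 2) *
            (∑ i, u i ^ 2 + ∑ i, v i ^ 2)) := by rw [hunit, mul_one]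
      _ ≤ c' * (2 * (∑ i, β i ^ 2) * (∑ i, u i ^ 2) +
            1 / 2 * (∑ i, α i ^ 2) * (∑ i, v i ^ 2)) := by
        gcongr
        exact (min_mul_add_le (by positivity) (by positivity)).trans_eq (by ring)
      _ ≤ ∑ i, ∑ j, (A i j) ^ 2 := by
        simpa only [hA] using mul_add_le_sum_sum_sq hc'1.le α β u v hcol horth
  · have hα2 := (Real.le_sqrt hc.le (by positivity)).1 hα
    have hβ2 := (Real.le_sqrt hc.le (by positivity)).1 hβ
    rw [mul_div_assoc]
    gcongr
    exact le_min (by linarith [sq_nonneg c]) (by linarith)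
end
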